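/- arXiv:math/0406457 — 3 statements merged into one kernel-verified Lean document; each statement's English description precedes it below -/
import Mathlib

section
/- Fix k with 1 ≤ k ≤ g. There exists a function v : ℝ^g → ℝ such that 𝓛(𝓐_k f) − 𝓐_k(𝓛 f) = v·f for every smooth f : ℝ^g → ℝ if and only if ∂_x u_k = ∂_k u_1; and in that case 𝓛(𝓐_k f) − 𝓐_k(𝓛 f) = (1/4)(u_k''' − 2u_1'u_k − 4u_1u_k')·f for every smooth f. -/
/-!
Expanding both composites with the Leibniz rule and the symmetry of second derivatives, all terms
of order at least three in `f` cancel: `[𝓛, 𝓐_k]` is a second-order operator with leading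
coefficient `∂_k u₁ - ∂_x u_k` and first-order coefficient its `x`-derivative. Testing against
`f = (x - x₀)²`, which vanishes to first order at `x₀`, shows that it is a multiplication
operator only if that coefficient vanishes identically, and then the zeroth-order coefficient
reduces to `(u_k''' - 2u₁'u_k - 4u₁u_k') / 4`.
-/

open scoped BigOperators

/-- Partial derivative `∂_i` (1-based index) on functions of `t : Fin g → ℝ`;
`∂_i ≡ 0` for `i = 0` or `i > g` (in particular `∂_{g+1} ≡ 0`). -/
noncomputable def pd {g : ℕ} {E : Type*} [NormedAddCommGroup E] [NormedSpace ℝ E]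
    (i : ℕ) (f : (Fin g → ℝ) → E) : (Fin g → ℝ) → E :=
  fun t => if h : 1 ≤ i ∧ i ≤ g then
    fderiv ℝ f t (Pi.single (⟨i - 1, by omega⟩ : Fin g) 1) else 0

/-- The Schrödinger operator `𝓛 f = ∂_x² f − u₁·f`. -/
noncomputable def opL {g : ℕ} (u : ℕ → (Fin g → ℝ) → ℝ)
    (f : (Fin g → ℝ) → ℝ) : (Fin g → ℝ) → ℝ :=
  fun t => pd 1 (pd 1 f) t - u 1 t * f t

/-- `𝓐_k f = ∂_x²∂_k f − (1/2)(u₁·∂_k f + ∂_k(u₁·f)) − (1/4)(u_k·∂_x f + ∂_x(u_k·f))`. -/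
noncomputable def opA {g : ℕ} (u : ℕ → (Fin g → ℝ) → ℝ) (k : ℕ)
    (f : (Fin g → ℝ) → ℝ) : (Fin g → ℝ) → ℝ :=
  fun t => pd 1 (pd 1 (pd k f)) t
    - (1/2 : ℝ) * (u 1 t * pd k f t + pd k (fun s => u 1 s * f s) t)
    - (1/4 : ℝ) * (u k t * pd 1 f t + pd 1 (fun s => u k s * f s) t)

/-- `𝓤_k f = 𝓐_k f − ∂_{k+1} f` (so `𝓤_g = 𝓐_g` since `∂_{g+1} ≡ 0`). -/
noncomputable def opU {g : ℕ} (u : ℕ → (Fin g → ℝ) → ℝ) (k : ℕ)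
    (f : (Fin g → ℝ) → ℝ) : (Fin g → ℝ) → ℝ :=
  fun t => opA u k f t - pd (k+1) f t

open scoped ContDiff

namespace LaxPair

variable {E : Type*} [NormedAddCommGroup E] [NormedSpace ℝ E]

noncomputable def dirDeriv (v : E) (f : E → ℝ) : E → ℝ := fun t => fderiv ℝ f t v

@[fun_prop]
lemma contDiff_dirDeriv (v : E) {f : E → ℝ} (hf : ContDiff ℝ ∞ f) :
    ContDiff ℝ ∞ (dirDeriv v f) :=
  (hf.fderiv_right (m := ∞) le_rfl).clm_apply contDiff_const

lemma dirDeriv_const (v : E) (c : ℝ) : dirDeriv v (fun _ : E => c) = fun _ => 0 := by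
  funext t; simp [dirDeriv]

lemma dirDeriv_clm (v : E) (ℓ : E →L[ℝ] ℝ) : dirDeriv v ℓ = fun _ => ℓ v := by
  funext t; simp [dirDeriv, ℓ.fderiv]

section Smooth

variable {A B : E → ℝ} (hA : ContDiff ℝ ∞ A) (hB : ContDiff ℝ ∞ B)
include hA hB

lemma dirDeriv_add (v : E) :
    dirDeriv v (fun t => A t + B t) = fun t => dirDeriv v A t + dirDeriv v B t := by
  funext t
  simp [dirDeriv, fderiv_fun_add (hA.differentiable (by simp) t) (hB.differentiable (by simp) t)]

lemma dirDeriv_sub (v : E) :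
    dirDeriv v (fun t => A t - B t) = fun t => dirDeriv v A t - dirDeriv v B t := by
  funext t
  simp [dirDeriv, fderiv_fun_sub (hA.differentiable (by simp) t) (hB.differentiable (by simp) t)]

lemma dirDeriv_mul (v : E) :
    dirDeriv v (fun t => A t * B t) = fun t => dirDeriv v A t * B t + A t * dirDeriv v B t := by
  funext t
  simp [dirDeriv, fderiv_fun_mul (hA.differentiable (by simp) t) (hB.differentiable (by simp) t)]
  ring

end Smooth

lemma dirDeriv_comm (v w : E) {f : E → ℝ} (hf : ContDiff ℝ ∞ f) :
    dirDeriv v (dirDeriv w f) = dirDeriv w (dirDeriv v f) := by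
  funext t
  have hf' : DifferentiableAt ℝ (fderiv ℝ f) t :=
    (hf.fderiv_right (m := ∞) le_rfl).differentiable (by simp) t
  have hsecond : ∀ v w : E, dirDeriv v (dirDeriv w f) t = fderiv ℝ (fderiv ℝ f) t v w := by
    intro v w
    change fderiv ℝ (fun s => fderiv ℝ f s w) t v = _
    simp [fderiv_clm_apply hf' (differentiableAt_const w)]
  rw [hsecond, hsecond]
  refine hf.contDiffAt.isSymmSndFDerivAt ?_ v w
  simp only [minSmoothness_of_isRCLikeNormedField]
  exact ENat.LEInfty.out

/-- `𝓛` with `∂_x` taken along `v` and potential `u₁`. -/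
noncomputable def schrodingerOp (v : E) (u₁ F : E → ℝ) : E → ℝ :=
  fun t => dirDeriv v (dirDeriv v F) t - u₁ t * F t

/-- `𝓐_k` with `∂_x` along `v`, `∂_k` along `w`, and potentials `u₁`, `u_k`. -/
noncomputable def flowOp (v w : E) (u₁ uₖ f : E → ℝ) : E → ℝ :=
  fun t => dirDeriv v (dirDeriv v (dirDeriv w f)) t
    - (1/2 : ℝ) * (u₁ t * dirDeriv w f t + dirDeriv w (fun s => u₁ s * f s) t)
    - (1/4 : ℝ) * (uₖ t * dirDeriv v f t + dirDeriv v (fun s => uₖ s * f s) t)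

/-- The commutator `[𝓛, 𝓐_k]`. -/
noncomputable def bracket (v w : E) (u₁ uₖ f : E → ℝ) : E → ℝ :=
  fun t => schrodingerOp v u₁ (flowOp v w u₁ uₖ f) t - flowOp v w u₁ uₖ (schrodingerOp v u₁ f) t

variable {u₁ uₖ : E → ℝ}

theorem bracket_apply (v w : E) {f : E → ℝ}
    (hu₁ : ContDiff ℝ ∞ u₁) (huₖ : ContDiff ℝ ∞ uₖ) (hf : ContDiff ℝ ∞ f) (t : E) :
    bracket v w u₁ uₖ f t
      = (dirDeriv w u₁ t - dirDeriv v uₖ t) * dirDeriv v (dirDeriv v f) t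
        + (dirDeriv v (dirDeriv w u₁) t - dirDeriv v (dirDeriv v uₖ) t) * dirDeriv v f t
        + ((1/2 : ℝ) * dirDeriv v (dirDeriv v (dirDeriv w u₁)) t - u₁ t * dirDeriv w u₁ t
            - (1/2 : ℝ) * dirDeriv v u₁ t * uₖ t
            - (1/4 : ℝ) * dirDeriv v (dirDeriv v (dirDeriv v uₖ)) t) * f t := by
  have hcomm : ∀ h : E → ℝ, ContDiff ℝ ∞ h →
      dirDeriv w (dirDeriv v h) = dirDeriv v (dirDeriv w h) := fun _ hh => dirDeriv_comm w v hh
  unfold bracket schrodingerOp flowOp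
  simp (disch := fun_prop) only [dirDeriv_sub, dirDeriv_add, dirDeriv_mul, dirDeriv_const, hcomm]
  ring

theorem bracket_apply_of_dirDeriv_eq (v w : E) {f : E → ℝ}
    (hu₁ : ContDiff ℝ ∞ u₁) (huₖ : ContDiff ℝ ∞ uₖ) (hf : ContDiff ℝ ∞ f)
    (hcompat : dirDeriv v uₖ = dirDeriv w u₁) (t : E) :
    bracket v w u₁ uₖ f t
      = (1/4 : ℝ) * (dirDeriv v (dirDeriv v (dirDeriv v uₖ)) t
          - 2 * dirDeriv v u₁ t * uₖ t - 4 * u₁ t * dirDeriv v uₖ t) * f t := by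
  rw [bracket_apply v w hu₁ huₖ hf, ← hcompat]
  ring

/-- Testing the commutator against `(ℓ s - ℓ t)²`, which vanishes to first order at `t` and has
second `v`-derivative `2`, isolates its leading coefficient at `t`. -/
theorem dirDeriv_eq_of_bracket_eq_mul (v w : E)
    (ℓ : E →L[ℝ] ℝ) (hℓ : ℓ v = 1) (hu₁ : ContDiff ℝ ∞ u₁) (huₖ : ContDiff ℝ ∞ uₖ) (c : E → ℝ)
    (hc : ∀ f : E → ℝ, ContDiff ℝ ∞ f → ∀ t, bracket v w u₁ uₖ f t = c t * f t) :
    dirDeriv v uₖ = dirDeriv w u₁ := by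
  funext t
  set p : E → ℝ := fun s => ℓ s - ℓ t
  have hp : ContDiff ℝ ∞ p := ℓ.contDiff.sub contDiff_const
  have hp_t : p t = 0 := sub_self _
  have hdp : dirDeriv v p = fun _ => 1 := by
    simp only [p, dirDeriv_sub ℓ.contDiff contDiff_const, dirDeriv_clm, dirDeriv_const, hℓ,
      sub_zero]
  have hdq : dirDeriv v (fun s => p s * p s) = fun s => 2 * p s := by
    rw [dirDeriv_mul hp hp, hdp]
    ring_nf
  have hddq : dirDeriv v (dirDeriv v (fun s => p s * p s)) t = 2 := by
    rw [hdq, dirDeriv_mul contDiff_const hp, dirDeriv_const, hdp]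
    ring
  have h := hc _ (hp.mul hp) t
  rw [bracket_apply v w hu₁ huₖ (hp.mul hp), hddq, hdq, hp_t] at h
  linarith

end LaxPair

open LaxPair

lemma pd_eq_dirDeriv {g i : ℕ} (hi : 1 ≤ i) (hig : i ≤ g) (f : (Fin g → ℝ) → ℝ) :
    pd i f = dirDeriv (Pi.single (⟨i - 1, by omega⟩ : Fin g) 1) f := by
  funext t
  simp only [pd, dirDeriv, dif_pos (And.intro hi hig)]

lemma opL_eq_schrodingerOp {g : ℕ} (hg : 1 ≤ g) (u : ℕ → (Fin g → ℝ) → ℝ) :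
    opL u = schrodingerOp (Pi.single (⟨0, hg⟩ : Fin g) 1) (u 1) := by
  funext F t
  simp only [opL, schrodingerOp, pd_eq_dirDeriv le_rfl hg]

lemma opA_eq_flowOp {g k : ℕ} (hk : 1 ≤ k) (hkg : k ≤ g) (u : ℕ → (Fin g → ℝ) → ℝ) :
    opA u k = flowOp (Pi.single (⟨0, by omega⟩ : Fin g) 1)
      (Pi.single (⟨k - 1, by omega⟩ : Fin g) 1) (u 1) (u k) := by
  funext f t
  simp only [opA, flowOp, pd_eq_dirDeriv le_rfl (hk.trans hkg), pd_eq_dirDeriv hk hkg]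

theorem statement0_general (g : ℕ) (u : ℕ → (Fin g → ℝ) → ℝ)
    (hu : ∀ i, ContDiff ℝ (⊤ : ℕ∞) (u i))
    (k : ℕ) (hk1 : 1 ≤ k) (hkg : k ≤ g) :
    ((∃ v : (Fin g → ℝ) → ℝ,
        ∀ f : (Fin g → ℝ) → ℝ, ContDiff ℝ (⊤ : ℕ∞) f → ∀ t,
          opL u (opA u k f) t - opA u k (opL u f) t = v t * f t)
      ↔ (∀ t, pd 1 (u k) t = pd k (u 1) t))
    ∧ ((∀ t, pd 1 (u k) t = pd k (u 1) t) →
        ∀ f : (Fin g → ℝ) → ℝ, ContDiff ℝ (⊤ : ℕ∞) f → ∀ t,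
          opL u (opA u k f) t - opA u k (opL u f) t
            = (1/4 : ℝ) * (pd 1 (pd 1 (pd 1 (u k))) t
                - 2 * pd 1 (u 1) t * u k t - 4 * u 1 t * pd 1 (u k) t) * f t) := by
  have hg : 1 ≤ g := hk1.trans hkg
  have hpd₁ : ∀ f, pd 1 f = dirDeriv (Pi.single (⟨0, hg⟩ : Fin g) 1) f :=
    pd_eq_dirDeriv le_rfl hg
  have hcompat_iff : (∀ t, pd 1 (u k) t = pd k (u 1) t) ↔
      dirDeriv (Pi.single (⟨0, hg⟩ : Fin g) 1) (u k)
        = dirDeriv (Pi.single (⟨k - 1, by omega⟩ : Fin g) 1) (u 1) := by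
    rw [funext_iff, hpd₁, pd_eq_dirDeriv hk1 hkg]
  rw [hcompat_iff, opL_eq_schrodingerOp hg, opA_eq_flowOp hk1 hkg]
  simp only [hpd₁]
  refine (fun hformula => ⟨⟨fun ⟨c, hc⟩ => ?_, fun hcompat => ⟨_, hformula hcompat⟩⟩, hformula⟩)
    fun hcompat f hf t =>
      bracket_apply_of_dirDeriv_eq _ _ (hu 1) (hu k) hf hcompat t
  exact dirDeriv_eq_of_bracket_eq_mul _ _
    (ContinuousLinearMap.proj ⟨0, hg⟩) (by simp) (hu 1) (hu k) c hc

/-- Fix `k` with `1 ≤ k ≤ g`. There exists a function `v` such that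
`𝓛(𝓐_k f) − 𝓐_k(𝓛 f) = v·f` for every smooth `f` iff `∂_x u_k = ∂_k u_1`; and in that
case `𝓛(𝓐_k f) − 𝓐_k(𝓛 f) = (1/4)(u_k''' − 2u_1'u_k − 4u_1u_k')·f` for every smooth `f`. -/
theorem statement0 (g : ℕ) (hg : 1 ≤ g) (u : ℕ → (Fin g → ℝ) → ℝ)
    (hu : ∀ i, ContDiff ℝ (⊤ : ℕ∞) (u i))
    (k : ℕ) (hk1 : 1 ≤ k) (hkg : k ≤ g) :
    ((∃ v : (Fin g → ℝ) → ℝ,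
        ∀ f : (Fin g → ℝ) → ℝ, ContDiff ℝ (⊤ : ℕ∞) f → ∀ t,
          opL u (opA u k f) t - opA u k (opL u f) t = v t * f t)
      ↔ (∀ t, pd 1 (u k) t = pd k (u 1) t))
    ∧ ((∀ t, pd 1 (u k) t = pd k (u 1) t) →
        ∀ f : (Fin g → ℝ) → ℝ, ContDiff ℝ (⊤ : ℕ∞) f → ∀ t,
          opL u (opA u k f) t - opA u k (opL u f) t
            = (1/4 : ℝ) * (pd 1 (pd 1 (pd 1 (u k))) t
                - 2 * pd 1 (u 1) t * u k t - 4 * u 1 t * pd 1 (u k) t) * f t) :=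
  statement0_general g u hu k hk1 hkg
end

section
/- Let g ≥ 1, let ξ ∈ ℂ with ξ ≠ 0, and let α_1, …, α_g ∈ ℂ satisfy (∑_{i=1}^g α_i ξ^i)² = ξ⁻¹. Define Φ_0 : ℝ^g → ℂ by Φ_0(t_1, …, t_g) = exp(∑_{1 ≤ k ≤ i ≤ g} α_i · t_k · ξ^{i−k+1}). Then ∂_x²Φ_0 = ξ⁻¹·Φ_0 and ∂_x²∂_kΦ_0 − ∂_{k+1}Φ_0 = α_k·Φ_0 for every k = 1, …, g (with ∂_{g+1} ≡ 0). That is, Φ_0 is a common eigenfunction of the operators 𝓛 = ∂_x² and 𝓤_k = ∂_x²∂_k − ∂_{k+1} (the operators of the family with u_1 = … = u_g ≡ 0) with eigenvalues ξ⁻¹, α_1, …, α_g. -/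
open scoped BigOperators

/-- The coordinate `t_k` (1-based); `0` for `k = 0` or `k > g`. -/
noncomputable def coord (g : ℕ) (k : ℕ) (t : Fin g → ℝ) : ℝ :=
  if h : 1 ≤ k ∧ k ≤ g then t ⟨k - 1, by omega⟩ else 0

/-- `Φ_0(t) = exp(∑_{1 ≤ k ≤ i ≤ g} α_i t_k ξ^{i−k+1})`. -/
noncomputable def Phi0 (g : ℕ) (ξ : ℂ) (α : ℕ → ℂ) : (Fin g → ℝ) → ℂ :=
  fun t => Complex.exp (∑ i ∈ Finset.Icc 1 g, ∑ k ∈ Finset.Icc 1 i,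
    α i * (coord g k t : ℂ) * ξ ^ (i - k + 1))


/-! The exponent of `Φ_0` is the real-linear form `t ↦ ∑_k c_k t_k` with
`c_k = ∑_{i ≥ k} α_i ξ^{i-k+1}`, so `∂_k Φ_0 = c_k Φ_0`. The coefficients satisfy
`c_k = ξ (α_k + c_{k+1})` and `c_{g+1} = 0`, while the hypothesis says `c_1² = ξ⁻¹`;
hence `∂_x² ∂_k Φ_0 - ∂_{k+1} Φ_0 = (ξ⁻¹ c_k - c_{k+1}) Φ_0 = α_k Φ_0`. -/

open Finset

lemma pd_const_mul_exp_clm {g : ℕ} (L : (Fin g → ℝ) →L[ℝ] ℂ) (a : ℂ) {k : ℕ}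
    (hk : 1 ≤ k ∧ k ≤ g) :
    pd k (fun t => a * Complex.exp (L t))
      = fun t => a * L (Pi.single ⟨k - 1, by omega⟩ 1) * Complex.exp (L t) := by
  funext t
  have hderiv : HasFDerivAt (fun t => a * Complex.exp (L t))
      ((a * Complex.exp (L t)) • L) t := by
    refine ((((Complex.hasDerivAt_exp (L t)).hasFDerivAt.restrictScalars ℝ).comp t
      L.hasFDerivAt).const_mul a).congr_fderiv ?_
    ext v
    simp only [smul_apply, ContinuousLinearMap.comp_apply,
      ContinuousLinearMap.coe_restrictScalars', ContinuousLinearMap.toSpanSingleton_apply,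
      smul_eq_mul]
    ring
  rw [pd, dif_pos hk, hderiv.fderiv, smul_apply, smul_eq_mul]
  ring

section Phi0

variable (g : ℕ) (ξ : ℂ) (α : ℕ → ℂ)

/-- `c_k`, the coefficient of `t_k` in the exponent of `Φ_0`. -/
noncomputable def expCoeff (k : ℕ) : ℂ :=
  ∑ i ∈ Icc k g, α i * ξ ^ (i - k + 1)

lemma expCoeff_one : expCoeff g ξ α 1 = ∑ i ∈ Icc 1 g, α i * ξ ^ i :=
  sum_congr rfl fun i hi => by rw [Nat.sub_add_cancel (mem_Icc.1 hi).1]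

lemma expCoeff_of_lt {k : ℕ} (hk : g < k) : expCoeff g ξ α k = 0 := by
  rw [expCoeff, Icc_eq_empty (by omega), sum_empty]

lemma expCoeff_eq_mul_add {k : ℕ} (hk : k ≤ g) :
    expCoeff g ξ α k = ξ * (α k + expCoeff g ξ α (k + 1)) := by
  have hIcc : Icc k g = insert k (Icc (k + 1) g) := by
    ext i; simp only [mem_Icc, mem_insert]; omega
  rw [expCoeff, hIcc, sum_insert (by simp), expCoeff, Nat.sub_self, zero_add, pow_one,
    mul_add, mul_sum, mul_comm ξ]
  congr 1
  refine sum_congr rfl fun i hi => ?_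
  rw [show i - k + 1 = i - (k + 1) + 1 + 1 by grind, pow_succ]
  ring

noncomputable def coordCLM (k : ℕ) : (Fin g → ℝ) →L[ℝ] ℝ :=
  if h : 1 ≤ k ∧ k ≤ g then ContinuousLinearMap.proj ⟨k - 1, by omega⟩ else 0

lemma coordCLM_apply (k : ℕ) (t : Fin g → ℝ) : coordCLM g k t = coord g k t := by
  unfold coordCLM coord
  split_ifs <;> rfl

lemma coord_single {j : ℕ} (hj : 1 ≤ j ∧ j ≤ g) (k : ℕ) :
    coord g k (Pi.single ⟨j - 1, by omega⟩ 1) = if k = j then 1 else 0 := by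
  unfold coord
  split_ifs <;> simp [Pi.single_apply, Fin.ext_iff] <;> omega

noncomputable def expForm : (Fin g → ℝ) →L[ℝ] ℂ :=
  ∑ k ∈ Icc 1 g, expCoeff g ξ α k • Complex.ofRealCLM.comp (coordCLM g k)

lemma expForm_apply (t : Fin g → ℝ) :
    expForm g ξ α t = ∑ k ∈ Icc 1 g, expCoeff g ξ α k * coord g k t := by
  simp only [expForm, _root_.sum_apply, smul_apply,
    ContinuousLinearMap.comp_apply, Complex.ofRealCLM_apply, coordCLM_apply, smul_eq_mul]

lemma expForm_single {j : ℕ} (hj : 1 ≤ j ∧ j ≤ g) :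
    expForm g ξ α (Pi.single ⟨j - 1, by omega⟩ 1) = expCoeff g ξ α j := by
  simp only [expForm_apply, coord_single g hj, apply_ite Complex.ofReal, Complex.ofReal_one,
    Complex.ofReal_zero, mul_ite, mul_one, mul_zero, sum_ite_eq', mem_Icc, if_pos hj]

lemma Phi0_eq_exp_expForm : Phi0 g ξ α = fun t => Complex.exp (expForm g ξ α t) := by
  funext t
  rw [Phi0, expForm_apply, sum_comm' (t' := Icc 1 g) (s' := fun k => Icc k g)
    (fun i k => by simp only [mem_Icc]; omega)]
  simp only [expCoeff, sum_mul]
  exact congrArg Complex.exp <| sum_congr rfl fun k _ => sum_congr rfl fun i _ => by ring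

lemma pd_const_mul_Phi0 (a : ℂ) {k : ℕ} (hk : 1 ≤ k) :
    pd k (fun t => a * Phi0 g ξ α t) = fun t => a * expCoeff g ξ α k * Phi0 g ξ α t := by
  by_cases hkg : k ≤ g
  · simp only [Phi0_eq_exp_expForm, pd_const_mul_exp_clm _ a ⟨hk, hkg⟩,
      expForm_single g ξ α ⟨hk, hkg⟩]
  · funext t
    rw [pd, dif_neg (by omega), expCoeff_of_lt g ξ α (by omega), mul_zero, zero_mul]

lemma pd_Phi0 {k : ℕ} (hk : 1 ≤ k) :
    pd k (Phi0 g ξ α) = fun t => expCoeff g ξ α k * Phi0 g ξ α t := by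
  simpa only [one_mul] using pd_const_mul_Phi0 g ξ α 1 hk

end Phi0

theorem statement10_general (g : ℕ) (ξ : ℂ) (hξ : ξ ≠ 0) (α : ℕ → ℂ)
    (hα : (∑ i ∈ Finset.Icc 1 g, α i * ξ ^ i) ^ 2 = ξ⁻¹) :
    (∀ t, pd 1 (pd 1 (Phi0 g ξ α)) t = ξ⁻¹ * Phi0 g ξ α t)
    ∧ (∀ k, 1 ≤ k → k ≤ g → ∀ t,
        pd 1 (pd 1 (pd k (Phi0 g ξ α))) t - pd (k+1) (Phi0 g ξ α) t
          = α k * Phi0 g ξ α t) := by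
  have hsq : expCoeff g ξ α 1 * expCoeff g ξ α 1 = ξ⁻¹ := by rw [← hα, expCoeff_one, sq]
  have hdxx (a : ℂ) :
      pd 1 (pd 1 (fun t => a * Phi0 g ξ α t)) = fun t => ξ⁻¹ * a * Phi0 g ξ α t := by
    rw [pd_const_mul_Phi0 g ξ α a le_rfl, pd_const_mul_Phi0 g ξ α _ le_rfl, ← hsq]
    ring_nf
  refine ⟨fun t => by simpa only [one_mul, mul_one] using congrFun (hdxx 1) t,
    fun k hk hkg t => ?_⟩
  rw [pd_Phi0 g ξ α hk, hdxx, pd_Phi0 g ξ α (by omega), expCoeff_eq_mul_add g ξ α hkg]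
  field_simp
  ring

/-- If `(∑_{i=1}^g α_i ξ^i)² = ξ⁻¹` (`ξ ≠ 0`), then
`Φ_0 = exp(∑_{1 ≤ k ≤ i ≤ g} α_i t_k ξ^{i−k+1})` satisfies `∂_x²Φ_0 = ξ⁻¹·Φ_0` and
`∂_x²∂_kΦ_0 − ∂_{k+1}Φ_0 = α_k·Φ_0` for every `k = 1, …, g` (with `∂_{g+1} ≡ 0`);
i.e. `Φ_0` is a common eigenfunction of `𝓛 = ∂_x²` and `𝓤_k = ∂_x²∂_k − ∂_{k+1}`
(the family with `u_1 = … = u_g ≡ 0`) with eigenvalues `ξ⁻¹, α_1, …, α_g`. -/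
theorem statement10 (g : ℕ) (hg : 1 ≤ g) (ξ : ℂ) (hξ : ξ ≠ 0) (α : ℕ → ℂ)
    (hα : (∑ i ∈ Finset.Icc 1 g, α i * ξ ^ i) ^ 2 = ξ⁻¹) :
    (∀ t, pd 1 (pd 1 (Phi0 g ξ α)) t = ξ⁻¹ * Phi0 g ξ α t)
    ∧ (∀ k, 1 ≤ k → k ≤ g → ∀ t,
        pd 1 (pd 1 (pd k (Phi0 g ξ α))) t - pd (k+1) (Phi0 g ξ α) t
          = α k * Phi0 g ξ α t) :=
  statement10_general g ξ hξ α hα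
end

section
/- Let f, h : ℝ → ℝ be differentiable at a point ξ. Then the limit as η → ξ (η ≠ ξ) of 𝓑(f, h)(ξ, η) := (ξη/(2(ξ−η)))·(f(ξ)h(η) − f(η)h(ξ)) exists and equals (ξ²/2)·(f'(ξ)h(ξ) − f(ξ)h'(ξ)) = (ξ²/2)·H_ξ[f, h], where H_ξ[f, h] = f'h − fh' is the Hirota operator. In particular (2/(ξη))·𝓑(f, h)(ξ, η) is a polarization of the Hirota operator. -/
/-!
With `ξ` fixed, `g η = f ξ * h η - f η * h ξ` vanishes at `η = ξ`, so `𝓑(f, h)(ξ, η)` is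
`-(ξη/2)` times the difference quotient of `g` at `ξ`, which tends to
`g'(ξ) = f(ξ) h'(ξ) - f'(ξ) h(ξ)`.
-/

open Filter Topology

section

variable {𝕜 : Type*} [NontriviallyNormedField 𝕜]

theorem HasDerivAt.const_mul_sub_mul_const {f h : 𝕜 → 𝕜} {f' h' ξ : 𝕜}
    (hf : HasDerivAt f f' ξ) (hh : HasDerivAt h h' ξ) :
    HasDerivAt (fun η => f ξ * h η - f η * h ξ) (f ξ * h' - f' * h ξ) ξ :=
  (hh.const_mul (f ξ)).sub (hf.mul_const (h ξ))

theorem mul_div_mul_sub_eq_neg_mul_slope (f h : 𝕜 → 𝕜) {ξ η : 𝕜} (hη : η ≠ ξ) :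
    ξ * η / (2 * (ξ - η)) * (f ξ * h η - f η * h ξ)
      = -(ξ * η / 2) * slope (fun η => f ξ * h η - f η * h ξ) ξ η := by
  have hξη : ξ - η ≠ 0 := sub_ne_zero.mpr hη.symm
  have hηξ : η - ξ ≠ 0 := sub_ne_zero.mpr hη
  rw [slope_def_field]
  field_simp
  ring

end

/-- If `f, h : ℝ → ℝ` are differentiable at `ξ`, then the limit as
`η → ξ` (`η ≠ ξ`) of `𝓑(f, h)(ξ, η) = (ξη/(2(ξ−η)))·(f(ξ)h(η) − f(η)h(ξ))` exists and
equals `(ξ²/2)·(f'(ξ)h(ξ) − f(ξ)h'(ξ)) = (ξ²/2)·H_ξ[f, h]`, where `H_ξ[f, h] = f'h − fh'`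
is the Hirota operator. In particular `(2/(ξη))·𝓑(f, h)(ξ, η)` is a polarization of
the Hirota operator. -/
theorem statement15 (f h : ℝ → ℝ) (ξ : ℝ)
    (hf : DifferentiableAt ℝ f ξ) (hh : DifferentiableAt ℝ h ξ) :
    Filter.Tendsto (fun η => ξ * η / (2 * (ξ - η)) * (f ξ * h η - f η * h ξ))
      (nhdsWithin ξ {ξ}ᶜ)
      (nhds (ξ ^ 2 / 2 * (deriv f ξ * h ξ - f ξ * deriv h ξ))) := by
  have hslope := hasDerivAt_iff_tendsto_slope.mp
    (hf.hasDerivAt.const_mul_sub_mul_const hh.hasDerivAt)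
  have hcoef : Tendsto (fun η => -(ξ * η / 2)) (𝓝[≠] ξ) (𝓝 (-(ξ * ξ / 2))) :=
    ((continuous_const.mul continuous_id).div_const 2).neg.continuousAt.tendsto.mono_left
      nhdsWithin_le_nhds
  have hlim := (hcoef.mul hslope).congr' <| eventually_nhdsWithin_of_forall
    fun η (hη : η ∈ ({ξ}ᶜ : Set ℝ)) => (mul_div_mul_sub_eq_neg_mul_slope f h hη).symm
  convert hlim using 2
  ring
end
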